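/- arXiv:2601.02279 — 3 statements merged into one kernel-verified Lean document; each statement's English description precedes it below -/
import Mathlib

section
/- Let (U,p) be a partial metric space with at least two points and define D(x,y) := p(x,y) if x ≠ y and D(x,y) := 0 if x = y. If the metric space (U,D) is hyperconvex, then p(x,x) = 0 for every x ∈ U, i.e., p is a metric on U. -/
def IsPartialMetric {U : Type*} (p : U → U → ℝ) : Prop :=
  (∀ x y, 0 ≤ p x y) ∧
  (∀ x y, x = y ↔ p x x = p x y ∧ p y y = p x y) ∧
  (∀ x y, p x x ≤ p x y) ∧
  (∀ x y, p x y = p y x) ∧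
  (∀ x y z, p x y ≤ p x z + p z y - p z z)

/-- Hyperconvexity for a metric `d` (radii are positive). -/
def MetricHyperconvex {U : Type*} (d : U → U → ℝ) : Prop :=
  ∀ (I : Type) (c : I → U) (r : I → ℝ),
    (∀ i, 0 < r i) → (∀ i j, d (c i) (c j) ≤ r i + r j) →
    ∃ x, ∀ i, d x (c i) ≤ r i

/-- If `(U,p)` is a partial metric space with at least two points and the associated
metric space `(U,D)`, where `D(x,y) = p(x,y)` for `x ≠ y` and `D(x,x) = 0`, is
hyperconvex, then `p` is a metric, i.e. all self-distances vanish. -/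
theorem D_hyperconvex_implies_metric {U : Type*} [DecidableEq U] (p : U → U → ℝ)
    (hp : IsPartialMetric p) (htwo : ∃ x y : U, x ≠ y)
    (h : MetricHyperconvex (fun x y => if x = y then 0 else p x y)) :
    ∀ x : U, p x x = 0 := by
  obtain ⟨hnn, heq, hsmall, hsym, htri⟩ := hp
  intro x
  by_contra hs0
  have hs : 0 < p x x := lt_of_le_of_ne (hnn x x) (Ne.symm hs0)
  obtain ⟨a, b, hab⟩ := htwo
  obtain ⟨y, hxy⟩ : ∃ y : U, x ≠ y := by
    by_cases hxa : x = a
    · exact ⟨b, hxa ▸ hab⟩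
    · exact ⟨a, hxa⟩
  set s := p x x with hsdef
  set t := p x y with htdef
  have hst : s ≤ t := hsmall x y
  obtain ⟨z, hz⟩ := h Bool (fun b => if b then x else y)
      (fun b => if b then s/2 else t - s/2)
      (by intro i; cases i <;> simp <;> linarith)
      (by intro i j; cases i <;> cases j <;>
        simp [hxy, Ne.symm hxy] <;> linarith [hsym x y])
  have h1 := hz true
  have h2 := hz false
  simp only [if_true, Bool.false_eq_true, if_false] at h1 h2
  by_cases hzx : z = x
  · subst hzx
    rw [if_neg hxy] at h2
    linarith
  · rw [if_neg hzx] at h1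
    have hp1 := hsmall x z
    have hp2 := hsym x z
    linarith
end

section
/- Let p be the partial metric on ℝ given by p(x,y) := 1 + |x − y|, and let D(x,y) := p(x,y) if x ≠ y, D(x,y) := 0 if x = y. Then the metric space (ℝ,D) is not hyperconvex: the closed D-balls of radius 1 centered at 1 and at 2 satisfy D(1,2) ≤ 1 + 1, yet no x ∈ ℝ satisfies both D(x,1) ≤ 1 and D(x,2) ≤ 1. -/
/-- The Hitzler–Seda metric `D` associated to the partial metric `p(x,y) = 1 + |x − y|`
on `ℝ`: `D(x,y) = p(x,y)` for `x ≠ y` and `D(x,x) = 0`. -/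
noncomputable def hsD : ℝ → ℝ → ℝ := fun x y =>
  if x = y then 0 else 1 + |x - y|

lemma hsD_le_one {x y : ℝ} (h : hsD x y ≤ 1) : x = y := by
  by_contra hne
  simp only [hsD, if_neg hne] at h
  have : |x - y| > 0 := abs_pos.mpr (sub_ne_zero.mpr hne)
  linarith

/-- `(ℝ, D)` is not hyperconvex: the two balls of radius `1` about `1` and `2`
have centers at distance `D(1,2) ≤ 1 + 1`, yet no point `x` satisfies both
`D(x,1) ≤ 1` and `D(x,2) ≤ 1`. -/
theorem hsD_not_hyperconvex :
    hsD 1 2 ≤ 1 + 1 ∧ (¬ ∃ x : ℝ, hsD x 1 ≤ 1 ∧ hsD x 2 ≤ 1) ∧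
    ¬ MetricHyperconvex hsD := by
  have hball : ¬ ∃ x : ℝ, hsD x 1 ≤ 1 ∧ hsD x 2 ≤ 1 := by
    rintro ⟨x, h1, h2⟩
    have := hsD_le_one h1
    have := hsD_le_one h2
    norm_num at *
    linarith
  refine ⟨?_, hball, ?_⟩
  · simp only [hsD]
    norm_num
  · intro H
    have hle : ∀ i j : Bool, hsD (if i then (1:ℝ) else 2) (if j then 1 else 2) ≤ 1 + 1 := by
      intro i j
      cases i <;> cases j <;> simp only [hsD] <;> norm_num
    obtain ⟨x, hx⟩ := H Bool (fun b => if b then 1 else 2) (fun _ => 1)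
      (fun _ => one_pos) hle
    exact hball ⟨x, by simpa using hx true, by simpa using hx false⟩
end

section
/- Let H ⊂ ℝ³ be the tripod H := {(t,0,0) : t ∈ [0,1]} ∪ {(0,t,0) : t ∈ [0,1]} ∪ {(0,0,t) : t ∈ [0,1]}, equipped with the partial metric p(x,y) := (‖x − y‖₁ + ‖x‖₁ + ‖y‖₁)/2, where ‖·‖₁ is the ℓ¹-norm, and let d_m(x,y) := max{p(x,y) − p(x,x), p(x,y) − p(y,y)}. Let e₁ := (1,0,0), e₂ := (0,1,0), e₃ := (0,0,1). Then d_m(e_i,e_j) = 1 for all distinct i,j ∈ {1,2,3}, but there is no x ∈ H with d_m(x,e_i) ≤ 1/2 for all i ∈ {1,2,3}. In particular, the metric space (H,d_m) is not hyperconvex. -/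
/-- The ℓ¹-norm on `ℝ³`. -/
noncomputable def l1norm (v : ℝ × ℝ × ℝ) : ℝ := |v.1| + |v.2.1| + |v.2.2|

/-- The partial metric `p(x,y) = (‖x − y‖₁ + ‖x‖₁ + ‖y‖₁)/2` on `ℝ³`. -/
noncomputable def tripodP (x y : ℝ × ℝ × ℝ) : ℝ :=
  (l1norm (x - y) + l1norm x + l1norm y) / 2

/-- The associated metric `d_m(x,y) = max{p(x,y) − p(x,x), p(x,y) − p(y,y)}`. -/
noncomputable def tripodDm (x y : ℝ × ℝ × ℝ) : ℝ :=
  max (tripodP x y - tripodP x x) (tripodP x y - tripodP y y)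

/-- The tripod `H ⊆ ℝ³`, the union of the three segments from the origin to the
standard unit vectors. -/
def tripod : Set (ℝ × ℝ × ℝ) :=
  {v | ∃ t ∈ Set.Icc (0 : ℝ) 1, v = (t, 0, 0)} ∪
  {v | ∃ t ∈ Set.Icc (0 : ℝ) 1, v = (0, t, 0)} ∪
  {v | ∃ t ∈ Set.Icc (0 : ℝ) 1, v = (0, 0, t)}

lemma arm1 (t : ℝ) (ht : 0 ≤ t) : 1 ≤ tripodDm (t, 0, 0) (0, 1, 0) := by
  have h : tripodP (t, 0, 0) (0, 1, 0) - tripodP (t, 0, 0) (t, 0, 0) = 1 := by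
    simp [tripodP, l1norm, Prod.mk_sub_mk, abs_of_nonneg ht]
    ring
  calc (1:ℝ) = _ := h.symm
    _ ≤ _ := le_max_left _ _

lemma arm2 (t : ℝ) (ht : 0 ≤ t) : 1 ≤ tripodDm (0, t, 0) (0, 0, 1) := by
  have h : tripodP (0, t, 0) (0, 0, 1) - tripodP (0, t, 0) (0, t, 0) = 1 := by
    simp [tripodP, l1norm, Prod.mk_sub_mk, abs_of_nonneg ht]
    ring
  calc (1:ℝ) = _ := h.symm
    _ ≤ _ := le_max_left _ _

lemma arm3 (t : ℝ) (ht : 0 ≤ t) : 1 ≤ tripodDm (0, 0, t) (1, 0, 0) := by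
  have h : tripodP (0, 0, t) (1, 0, 0) - tripodP (0, 0, t) (0, 0, t) = 1 := by
    simp [tripodP, l1norm, Prod.mk_sub_mk, abs_of_nonneg ht]
    ring
  calc (1:ℝ) = _ := h.symm
    _ ≤ _ := le_max_left _ _

/-- On the tripod with the ℓ¹ partial metric, the associated metric `d_m` gives the
unit vectors pairwise distance `1`, but no point of the tripod is within `d_m`-distance
`1/2` of all three; in particular `(H, d_m)` is not hyperconvex. -/
theorem tripod_not_dm_hyperconvex :
    (tripodDm (1, 0, 0) (0, 1, 0) = 1 ∧ tripodDm (0, 1, 0) (1, 0, 0) = 1 ∧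
     tripodDm (1, 0, 0) (0, 0, 1) = 1 ∧ tripodDm (0, 0, 1) (1, 0, 0) = 1 ∧
     tripodDm (0, 1, 0) (0, 0, 1) = 1 ∧ tripodDm (0, 0, 1) (0, 1, 0) = 1) ∧
    (¬ ∃ x ∈ tripod, tripodDm x (1, 0, 0) ≤ 1 / 2 ∧
        tripodDm x (0, 1, 0) ≤ 1 / 2 ∧ tripodDm x (0, 0, 1) ≤ 1 / 2) ∧
    ¬ MetricHyperconvex (fun x y : tripod => tripodDm x y) := by
  have hpair : (tripodDm (1, 0, 0) (0, 1, 0) = 1 ∧ tripodDm (0, 1, 0) (1, 0, 0) = 1 ∧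
     tripodDm (1, 0, 0) (0, 0, 1) = 1 ∧ tripodDm (0, 0, 1) (1, 0, 0) = 1 ∧
     tripodDm (0, 1, 0) (0, 0, 1) = 1 ∧ tripodDm (0, 0, 1) (0, 1, 0) = 1) := by
    norm_num [tripodDm, tripodP, l1norm, Prod.mk_sub_mk]
  have hno : ¬ ∃ x ∈ tripod, tripodDm x (1, 0, 0) ≤ 1 / 2 ∧
        tripodDm x (0, 1, 0) ≤ 1 / 2 ∧ tripodDm x (0, 0, 1) ≤ 1 / 2 := by
    rintro ⟨x, hx, h1, h2, h3⟩
    rcases hx with (⟨t, ht, rfl⟩ | ⟨t, ht, rfl⟩) | ⟨t, ht, rfl⟩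
    · have := arm1 t ht.1; linarith
    · have := arm2 t ht.1; linarith
    · have := arm3 t ht.1; linarith
  refine ⟨hpair, hno, ?_⟩
  intro hH
  have he1 : ((1:ℝ), (0:ℝ), (0:ℝ)) ∈ tripod := Or.inl (Or.inl ⟨1, by norm_num, rfl⟩)
  have he2 : ((0:ℝ), (1:ℝ), (0:ℝ)) ∈ tripod := Or.inl (Or.inr ⟨1, by norm_num, rfl⟩)
  have he3 : ((0:ℝ), (0:ℝ), (1:ℝ)) ∈ tripod := Or.inr ⟨1, by norm_num, rfl⟩
  set c : Fin 3 → tripod := ![⟨_, he1⟩, ⟨_, he2⟩, ⟨_, he3⟩] with hc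
  have hself : ∀ v : ℝ × ℝ × ℝ, tripodDm v v = 0 := by
    intro v; simp [tripodDm, tripodP, l1norm]
  obtain ⟨x, hx⟩ := hH (Fin 3) c (fun _ => 1/2) (by norm_num)
    (by
      intro i j
      fin_cases i <;> fin_cases j <;>
        norm_num [hc, tripodDm, tripodP, l1norm, Prod.mk_sub_mk])
  exact hno ⟨x.1, x.2, hx 0, hx 1, hx 2⟩
end
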